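/- arXiv:2412.09845 — 2 statements merged into one kernel-verified Lean document; each statement's English description precedes it below -/
import Mathlib

section
/- Under conditional exchangeability for study participation (Y(a) ⟂ S | X), conditional treatment exchangeability within the study (Y(a) ⟂ A | X, S=1), consistency (Y = Y(a) when S=1, A=a), and positivity of both participation and treatment assignment, the target mean E[Y(a) | S=0] is identified by the inverse-probability-weighting formula E[ I(S=1, A=a) · (1 − h(X)) / (h(X) e_a(X)) · Y ] / E[ I(S=1, A=a) · (1 − h(X)) / (h(X) e_a(X)) ], where h(X) = P(S=1 | X) and e_a(X) = P(A=a | X, S=1). -/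
/-!
Let `m = σ(X)` and `V = (Y(1), Y(0))`. If `V` and a binary `T` are conditionally independent
given `m`, then for every bounded nonnegative `m`-measurable `k` the finite measures
`k T · μ` and `k P(T = 1 | m) · μ` have the same pushforward under `V` (on sets this is the
product formula for conditional independence, plus pulling `m`-measurable factors out of
conditional expectations). Hence `T` may be replaced by `P(T = 1 | m)` in `∫ k T φ(V)`.

With `w = (1 - h) / (h e)`, doing this for `A` within the study and then for `S` turns
`E[I(S = 1, A = 1) w φ(V)]` into `E[h e w φ(V)] = E[(1 - h) φ(V)]`, and once more (for `1 - S`)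
into `E[I(S = 0) φ(V)]`; `φ = 1` gives the normalising constant `P(S = 0)`.

Positivity is only assumed on the target population. But `{h < c ∨ e < c}` is `m`-measurable
and carries no mass with `S = 0`, so `h = 1` almost surely on it; there the weight vanishes,
and elsewhere it is bounded by `c⁻²`, as the first step requires.
-/

open MeasureTheory ProbabilityTheory Set

section General

variable {Ω β : Type*} {m : MeasurableSpace Ω} [mΩ : MeasurableSpace Ω]

lemma mem_Icc_zero_one_of_eq_zero_or_eq_one {x : ℝ} (hx : x = 0 ∨ x = 1) :
    x ∈ Icc (0 : ℝ) 1 := by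
  rcases hx with rfl | rfl <;> simp

lemma integral_mul_comp_eq_of_forall_setIntegral_preimage_eq [MeasurableSpace β]
    {ν : Measure Ω} {f g : Ω → ℝ} (hf : 0 ≤ᵐ[ν] f) (hg : 0 ≤ᵐ[ν] g)
    (hfi : Integrable f ν) (hgi : Integrable g ν) {V : Ω → β} (hV : Measurable V)
    (hfg : ∀ t, MeasurableSet t → ∫ ω in V ⁻¹' t, f ω ∂ν = ∫ ω in V ⁻¹' t, g ω ∂ν)
    {φ : β → ℝ} (hφ : Measurable φ) :
    ∫ ω, f ω * φ (V ω) ∂ν = ∫ ω, g ω * φ (V ω) ∂ν := by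
  have push : ∀ {f : Ω → ℝ}, 0 ≤ᵐ[ν] f → Integrable f ν → ∫ ω, f ω * φ (V ω) ∂ν =
      ∫ y, φ y ∂(ν.withDensity fun ω => ENNReal.ofReal (f ω)).map V := by
    intro f hf hfi
    rw [integral_map hV.aemeasurable hφ.aestronglyMeasurable,
      integral_withDensity_eq_integral_toReal_smul₀ hfi.aemeasurable.ennreal_ofReal
        (ae_of_all _ fun _ => ENNReal.ofReal_lt_top)]
    refine integral_congr_ae ?_
    filter_upwards [hf] with ω hω
    simp [ENNReal.toReal_ofReal hω]
  rw [push hf hfi, push hg hgi]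
  congr 1
  ext t ht
  rw [Measure.map_apply hV ht, Measure.map_apply hV ht, withDensity_apply _ (hV ht),
    withDensity_apply _ (hV ht),
    ← ofReal_integral_eq_lintegral_ofReal hfi.integrableOn (ae_restrict_of_ae hf),
    ← ofReal_integral_eq_lintegral_ofReal hgi.integrableOn (ae_restrict_of_ae hg), hfg t ht]

lemma setIntegral_eq_measureReal_mul_integral_cond (μ : Measure Ω) [IsFiniteMeasure μ]
    (s : Set Ω) (f : Ω → ℝ) : ∫ ω in s, f ω ∂μ = μ.real s * ∫ ω, f ω ∂μ[|s] := by
  rcases eq_or_ne (μ s) 0 with hs | hs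
  · simp [Measure.restrict_eq_zero.mpr hs, measureReal_def, hs]
  · rw [ProbabilityTheory.cond, integral_smul_measure, smul_eq_mul, ENNReal.toReal_inv,
      ← mul_assoc, measureReal_def,
      mul_inv_cancel₀ (ENNReal.toReal_ne_zero.mpr ⟨hs, measure_ne_top μ s⟩), one_mul]

lemma ae_cond_iff_ae_restrict {μ : Measure Ω} [IsFiniteMeasure μ] {s : Set Ω}
    {p : Ω → Prop} : (∀ᵐ ω ∂μ[|s], p ω) ↔ ∀ᵐ ω ∂μ.restrict s, p ω :=
  Measure.ae_ennreal_smul_measure_iff (ENNReal.inv_ne_zero.mpr (measure_ne_top μ s))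

variable {ν : Measure Ω} [IsFiniteMeasure ν]

lemma integrable_of_eq_zero_or_eq_one {T : Ω → ℝ} (hT : Measurable T)
    (hTbin : ∀ ω, T ω = 0 ∨ T ω = 1) : Integrable T ν :=
  Integrable.of_bound hT.aestronglyMeasurable 1 (ae_of_all _ fun ω => by
    rcases hTbin ω with h | h <;> simp [h])

lemma integrable_mul_of_ae_mem_Icc {M : ℝ} {k T : Ω → ℝ} (hk : AEStronglyMeasurable k ν)
    (hT : AEStronglyMeasurable T ν) (hkM : ∀ᵐ ω ∂ν, k ω ∈ Icc 0 M)
    (hT01 : ∀ᵐ ω ∂ν, T ω ∈ Icc 0 1) : Integrable (fun ω => k ω * T ω) ν := by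
  refine Integrable.of_bound (hk.mul hT) M ?_
  filter_upwards [hkM, hT01] with ω ⟨hk0, hkM⟩ ⟨hT0, hT1⟩
  rw [Real.norm_eq_abs, abs_of_nonneg (mul_nonneg hk0 hT0)]
  nlinarith

lemma integral_mul_condExp_of_aestronglyMeasurable (hm : m ≤ mΩ) {k ψ : Ω → ℝ}
    (hk : AEStronglyMeasurable[m] k ν) (hkψ : Integrable (k * ψ) ν) (hψ : Integrable ψ ν) :
    ∫ ω, k ω * ψ ω ∂ν = ∫ ω, k ω * ν[ψ|m] ω ∂ν :=
  calc ∫ ω, k ω * ψ ω ∂ν = ∫ ω, ν[k * ψ|m] ω ∂ν := (integral_condExp hm).symm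
    _ = ∫ ω, k ω * ν[ψ|m] ω ∂ν :=
      integral_congr_ae (condExp_mul_of_aestronglyMeasurable_left hk hkψ hψ)

lemma ae_mem_Icc_of_ae_eq_condExp (hm : m ≤ mΩ) {T q : Ω → ℝ} (hT : Measurable T)
    (hTbin : ∀ ω, T ω = 0 ∨ T ω = 1) (hq : q =ᵐ[ν] ν[T|m]) : ∀ᵐ ω ∂ν, q ω ∈ Icc 0 1 := by
  have hle : ν[T|m] ≤ᵐ[ν] ν[fun _ => (1 : ℝ)|m] :=
    condExp_mono (integrable_of_eq_zero_or_eq_one hT hTbin) (integrable_const 1)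
      (ae_of_all _ fun ω => (mem_Icc_zero_one_of_eq_zero_or_eq_one (hTbin ω)).2)
  rw [condExp_const (μ := ν) hm (1 : ℝ)] at hle
  filter_upwards [hq, hle, condExp_nonneg (m := m) (ae_of_all ν fun ω =>
    (mem_Icc_zero_one_of_eq_zero_or_eq_one (hTbin ω)).1)] with ω hq h1 h0
  exact hq ▸ ⟨h0, h1⟩

lemma condExp_one_sub_ae_eq (hm : m ≤ mΩ) {T q : Ω → ℝ} (hT : Integrable T ν)
    (hq : q =ᵐ[ν] ν[T|m]) : (fun ω => 1 - q ω) =ᵐ[ν] ν[fun ω => 1 - T ω|m] := by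
  have h : ν[fun ω => 1 - T ω|m] =ᵐ[ν] ν[fun _ => (1 : ℝ)|m] - ν[T|m] :=
    condExp_sub (integrable_const 1) hT m
  rw [condExp_const hm] at h
  filter_upwards [h, hq] with ω h hq using by simp [h, hq]

lemma ae_restrict_condExp_eq_of_ae_restrict_eq (hm : m ≤ mΩ) {s : Set Ω}
    (hs : MeasurableSet[m] s) {f : Ω → ℝ} (hf : Integrable f ν) {c : ℝ}
    (hfc : ∀ᵐ ω ∂ν.restrict s, f ω = c) : ∀ᵐ ω ∂ν.restrict s, ν[f|m] ω = c :=
  (condExp_restrict_ae_eq_restrict hm hs hf).symm.trans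
    ((condExp_congr_ae hfc).trans (condExp_const (μ := ν.restrict s) hm c).eventuallyEq)

theorem ae_eq_one_or_le_of_ae_cond (hm : m ≤ mΩ) {S H E : Ω → ℝ} {c : ℝ} (hS : Measurable S)
    (hSbin : ∀ ω, S ω = 0 ∨ S ω = 1) (hH : StronglyMeasurable[m] H)
    (hE : StronglyMeasurable[m] E) (hHS : H =ᵐ[ν] ν[S|m])
    (hpos : ∀ᵐ ω ∂ν[|{ω | S ω = 0}], c ≤ H ω ∧ c ≤ E ω) :
    ∀ᵐ ω ∂ν, H ω = 1 ∨ c ≤ H ω ∧ c ≤ E ω := by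
  set s := {ω | c ≤ H ω ∧ c ≤ E ω}ᶜ with hs_def
  have hs : MeasurableSet[m] s :=
    ((measurableSet_le measurable_const hH.measurable).inter
      (measurableSet_le measurable_const hE.measurable)).compl
  have hB0 : MeasurableSet {ω | S ω = 0} := hS (measurableSet_singleton 0)
  have hS1 : ∀ᵐ ω ∂ν.restrict s, S ω = 1 := by
    have h := ae_cond_iff_ae_restrict.mp hpos
    rw [ae_restrict_iff' hB0] at h
    rw [ae_restrict_iff' (hm _ hs)]
    filter_upwards [h] with ω h hωs
    exact (hSbin ω).resolve_left fun h0 => hωs (h h0)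
  have hH1 : ∀ᵐ ω ∂ν.restrict s, H ω = 1 := by
    filter_upwards [ae_restrict_of_ae hHS, ae_restrict_condExp_eq_of_ae_restrict_eq hm hs
      (integrable_of_eq_zero_or_eq_one hS hSbin) hS1] with ω h h1 using h.trans h1
  rw [ae_restrict_iff' (hm _ hs)] at hH1
  filter_upwards [hH1] with ω h
  by_cases hω : ω ∈ s
  · exact Or.inl (h hω)
  · exact Or.inr (by simpa [hs_def] using hω)

variable [StandardBorelSpace Ω] [MeasurableSpace β] {hm : m ≤ mΩ} {V : Ω → β} {T q k : Ω → ℝ}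
  {M : ℝ}

theorem ProbabilityTheory.CondIndepFun.setIntegral_preimage_mul_eq_condExp (hV : Measurable V)
    (hT : Measurable T) (hTbin : ∀ ω, T ω = 0 ∨ T ω = 1) (hind : CondIndepFun m hm V T ν)
    (hq : q =ᵐ[ν] ν[T|m]) (hk : StronglyMeasurable[m] k) (hkM : ∀ᵐ ω ∂ν, k ω ∈ Icc 0 M)
    {t : Set β} (ht : MeasurableSet t) :
    ∫ ω in V ⁻¹' t, k ω * T ω ∂ν = ∫ ω in V ⁻¹' t, k ω * q ω ∂ν := by
  have hVt : MeasurableSet (V ⁻¹' t) := hV ht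
  have hTt : MeasurableSet (V ⁻¹' t ∩ T ⁻¹' {1}) := hVt.inter (hT (measurableSet_singleton 1))
  have hq1 : q =ᵐ[ν] ν[(T ⁻¹' {1}).indicator (fun _ => (1 : ℝ))|m] := by
    have hT1 : (T ⁻¹' {1}).indicator (fun _ => (1 : ℝ)) = T := by
      ext ω; rcases hTbin ω with h | h <;> simp [h]
    rwa [hT1]
  have hqm : AEStronglyMeasurable[m] q ν :=
    stronglyMeasurable_condExp.aestronglyMeasurable.congr hq.symm
  have hkqM : ∀ᵐ ω ∂ν, k ω * q ω ∈ Icc 0 M := by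
    filter_upwards [hkM, ae_mem_Icc_of_ae_eq_condExp hm hT hTbin hq]
      with ω ⟨hk0, hkM⟩ ⟨hq0, hqle⟩
    exact ⟨mul_nonneg hk0 hq0, by nlinarith⟩
  have hmul_ind : ∀ {j : Ω → ℝ}, AEStronglyMeasurable j ν → (∀ᵐ ω ∂ν, j ω ∈ Icc 0 M) →
      ∀ s, MeasurableSet s → Integrable (fun ω => j ω * s.indicator (fun _ => (1 : ℝ)) ω) ν :=
    fun hj hjM s hs => integrable_mul_of_ae_mem_Icc hj
      ((measurable_const.indicator hs).aestronglyMeasurable) hjM (ae_of_all _ fun ω => by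
        by_cases h : ω ∈ s <;> simp [h])
  rw [← integral_indicator hVt, ← integral_indicator hVt]
  calc ∫ ω, (V ⁻¹' t).indicator (fun ω => k ω * T ω) ω ∂ν
      = ∫ ω, k ω * (V ⁻¹' t ∩ T ⁻¹' {1}).indicator (fun _ => (1 : ℝ)) ω ∂ν := by
        congr 1; ext ω
        by_cases h : ω ∈ V ⁻¹' t <;> rcases hTbin ω with hω | hω <;> simp [h, hω]
    _ = ∫ ω, k ω * ν[(V ⁻¹' t ∩ T ⁻¹' {1}).indicator (fun _ => (1 : ℝ))|m] ω ∂ν :=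
        integral_mul_condExp_of_aestronglyMeasurable hm hk.aestronglyMeasurable
          (hmul_ind (hk.mono hm).aestronglyMeasurable hkM _ hTt)
          ((integrable_const 1).indicator hTt)
    _ = ∫ ω, k ω * q ω * ν[(V ⁻¹' t).indicator (fun _ => (1 : ℝ))|m] ω ∂ν := by
        refine integral_congr_ae ?_
        filter_upwards [(condIndepFun_iff_condExp_inter_preimage_eq_mul hV hT).mp hind t {1} ht
          (measurableSet_singleton 1), hq1] with ω h hqω
        rw [h, hqω]
        ring
    _ = ∫ ω, k ω * q ω * (V ⁻¹' t).indicator (fun _ => (1 : ℝ)) ω ∂ν :=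
        (integral_mul_condExp_of_aestronglyMeasurable hm (hk.aestronglyMeasurable.mul hqm)
          (hmul_ind ((hk.mono hm).aestronglyMeasurable.mul (hqm.mono hm)) hkqM _ hVt)
          ((integrable_const 1).indicator hVt)).symm
    _ = ∫ ω, (V ⁻¹' t).indicator (fun ω => k ω * q ω) ω ∂ν := by
        congr 1; ext ω; by_cases h : ω ∈ V ⁻¹' t <;> simp [h]

theorem ProbabilityTheory.CondIndepFun.integral_mul_comp_eq_condExp (hV : Measurable V)
    (hT : Measurable T) (hTbin : ∀ ω, T ω = 0 ∨ T ω = 1) (hind : CondIndepFun m hm V T ν)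
    (hq : q =ᵐ[ν] ν[T|m]) (hk : StronglyMeasurable[m] k) (hkM : ∀ᵐ ω ∂ν, k ω ∈ Icc 0 M)
    {φ : β → ℝ} (hφ : Measurable φ) :
    ∫ ω, k ω * T ω * φ (V ω) ∂ν = ∫ ω, k ω * q ω * φ (V ω) ∂ν := by
  have hkm : AEStronglyMeasurable k ν := (hk.mono hm).aestronglyMeasurable
  have hq01 := ae_mem_Icc_of_ae_eq_condExp hm hT hTbin hq
  have hT01 : ∀ ω, T ω ∈ Icc 0 1 := fun ω => mem_Icc_zero_one_of_eq_zero_or_eq_one (hTbin ω)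
  refine integral_mul_comp_eq_of_forall_setIntegral_preimage_eq
    (f := fun ω => k ω * T ω) (g := fun ω => k ω * q ω) ?_ ?_
    (integrable_mul_of_ae_mem_Icc hkm hT.aestronglyMeasurable hkM (ae_of_all _ hT01))
    (integrable_mul_of_ae_mem_Icc hkm
      ((stronglyMeasurable_condExp.mono hm).aestronglyMeasurable.congr hq.symm) hkM hq01)
    hV (fun t ht => hind.setIntegral_preimage_mul_eq_condExp hV hT hTbin hq hk hkM ht) hφ
  · filter_upwards [hkM] with ω hk0 using mul_nonneg hk0.1 (hT01 ω).1
  · filter_upwards [hkM, hq01] with ω hk0 hq0 using mul_nonneg hk0.1 hq0.1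

end General

noncomputable def ipwWeight (h e : ℝ) : ℝ := (1 - h) / (h * e)

section Weight

variable {h e c : ℝ}

lemma mul_mul_ipwWeight (hc : 0 < c) (hhe : h = 1 ∨ c ≤ h ∧ c ≤ e) :
    h * e * ipwWeight h e = 1 - h := by
  rcases hhe with rfl | ⟨hh, he⟩
  · simp [ipwWeight]
  · unfold ipwWeight
    field_simp [(hc.trans_le hh).ne', (hc.trans_le he).ne']

lemma ipwWeight_mem_Icc (hc : 0 < c) (hh1 : h ≤ 1) (hhe : h = 1 ∨ c ≤ h ∧ c ≤ e) :
    ipwWeight h e ∈ Icc 0 (c ^ 2)⁻¹ := by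
  rcases hhe with rfl | ⟨hh, he⟩
  · simpa [ipwWeight] using sq_nonneg c
  · have hc2 : 0 < c ^ 2 := pow_pos hc 2
    have hhe : c ^ 2 ≤ h * e := by nlinarith
    unfold ipwWeight
    refine ⟨div_nonneg (by linarith) (hc2.le.trans hhe), ?_⟩
    rw [div_le_iff₀ (hc2.trans_le hhe)]
    calc 1 - h ≤ (c ^ 2)⁻¹ * c ^ 2 := by rw [inv_mul_cancel₀ hc2.ne']; linarith
      _ ≤ (c ^ 2)⁻¹ * (h * e) := by gcongr

lemma mul_ipwWeight_mem_Icc (hc : 0 < c) (hh1 : h ≤ 1) (hhe : h = 1 ∨ c ≤ h ∧ c ≤ e) :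
    e * ipwWeight h e ∈ Icc 0 c⁻¹ := by
  rcases hhe with rfl | ⟨hh, he⟩
  · simpa [ipwWeight] using hc.le
  · have hpos : 0 < h := hc.trans_le hh
    have : e * ipwWeight h e = (1 - h) / h := by
      unfold ipwWeight; field_simp [(hc.trans_le he).ne']
    rw [this]
    refine ⟨div_nonneg (by linarith) hpos.le, ?_⟩
    rw [div_le_iff₀ hpos]
    calc 1 - h ≤ c⁻¹ * c := by rw [inv_mul_cancel₀ hc.ne']; linarith
      _ ≤ c⁻¹ * h := by gcongr

end Weight

section Identification

variable {Ω β : Type*} {m : MeasurableSpace Ω} [mΩ : MeasurableSpace Ω] [StandardBorelSpace Ω]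
  [MeasurableSpace β] {hm : m ≤ mΩ} {μ : Measure Ω} [IsFiniteMeasure μ] {S T H E : Ω → ℝ}
  {V : Ω → β} {c : ℝ}

theorem integral_treated_eq_integral_propensity_mul (hS : Measurable S) (hT : Measurable T)
    (hV : Measurable V) (hSbin : ∀ ω, S ω = 0 ∨ S ω = 1) (hTbin : ∀ ω, T ω = 0 ∨ T ω = 1)
    (hindT : CondIndepFun m hm V T μ[|{ω | S ω = 1}])
    (hET : E =ᵐ[μ[|{ω | S ω = 1}]] μ[|{ω | S ω = 1}][T|m]) {k : Ω → ℝ}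
    (hk : StronglyMeasurable[m] k) {M : ℝ} (hkM : ∀ᵐ ω ∂μ, k ω ∈ Icc 0 M) {φ : β → ℝ}
    (hφ : Measurable φ) :
    ∫ ω, (if S ω = 1 ∧ T ω = 1 then 1 else 0) * k ω * φ (V ω) ∂μ =
      ∫ ω, E ω * k ω * S ω * φ (V ω) ∂μ := by
  set B1 := {ω | S ω = 1}
  have hB1 : MeasurableSet B1 := hS (measurableSet_singleton 1)
  calc ∫ ω, (if S ω = 1 ∧ T ω = 1 then 1 else 0) * k ω * φ (V ω) ∂μ
      = ∫ ω in B1, k ω * T ω * φ (V ω) ∂μ := by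
        rw [← integral_indicator hB1]
        congr 1; ext ω
        rcases hSbin ω with hs | hs <;> rcases hTbin ω with ht | ht <;> simp [B1, hs, ht]
    _ = μ.real B1 * ∫ ω, k ω * T ω * φ (V ω) ∂μ[|B1] :=
        setIntegral_eq_measureReal_mul_integral_cond μ B1 _
    _ = μ.real B1 * ∫ ω, k ω * E ω * φ (V ω) ∂μ[|B1] := by
        rw [hindT.integral_mul_comp_eq_condExp hV hT hTbin hET hk
          (cond_absolutelyContinuous.ae_le hkM) hφ]
    _ = ∫ ω, E ω * k ω * S ω * φ (V ω) ∂μ := by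
        rw [← setIntegral_eq_measureReal_mul_integral_cond, ← integral_indicator hB1]
        congr 1; ext ω
        rcases hSbin ω with hs | hs <;> simp [B1, hs, mul_comm]

theorem integral_ipw_eq_setIntegral_target (hS : Measurable S) (hT : Measurable T)
    (hV : Measurable V) (hSbin : ∀ ω, S ω = 0 ∨ S ω = 1) (hTbin : ∀ ω, T ω = 0 ∨ T ω = 1)
    (hindS : CondIndepFun m hm V S μ) (hindT : CondIndepFun m hm V T μ[|{ω | S ω = 1}])
    (hH : StronglyMeasurable[m] H) (hE : StronglyMeasurable[m] E) (hHS : H =ᵐ[μ] μ[S|m])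
    (hET : E =ᵐ[μ[|{ω | S ω = 1}]] μ[|{ω | S ω = 1}][T|m]) (hc : 0 < c)
    (hpos : ∀ᵐ ω ∂μ[|{ω | S ω = 0}], c ≤ H ω ∧ c ≤ E ω) {φ : β → ℝ} (hφ : Measurable φ) :
    ∫ ω, (if S ω = 1 ∧ T ω = 1 then 1 else 0) * ipwWeight (H ω) (E ω) * φ (V ω) ∂μ =
      ∫ ω in {ω | S ω = 0}, φ (V ω) ∂μ := by
  set w := fun ω => ipwWeight (H ω) (E ω)
  have hgood := ae_eq_one_or_le_of_ae_cond hm hS hSbin hH hE hHS hpos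
  have hH01 := ae_mem_Icc_of_ae_eq_condExp hm hS hSbin hHS
  have hwm : StronglyMeasurable[m] w :=
    ((measurable_const.sub hH.measurable).div (hH.measurable.mul hE.measurable)).stronglyMeasurable
  have hwM : ∀ᵐ ω ∂μ, w ω ∈ Icc 0 (c ^ 2)⁻¹ := by
    filter_upwards [hgood, hH01] with ω h h01 using ipwWeight_mem_Icc hc h01.2 h
  have hEwM : ∀ᵐ ω ∂μ, E ω * w ω ∈ Icc 0 c⁻¹ := by
    filter_upwards [hgood, hH01] with ω h h01 using mul_ipwWeight_mem_Icc hc h01.2 h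
  have hindS' : CondIndepFun m hm V (fun ω => 1 - S ω) μ :=
    hindS.comp measurable_id (measurable_const.sub measurable_id)
  have hSbin' : ∀ ω, 1 - S ω = 0 ∨ 1 - S ω = 1 := fun ω => by
    rcases hSbin ω with h | h <;> simp [h]
  have hB0 : MeasurableSet {ω | S ω = 0} := hS (measurableSet_singleton 0)
  calc ∫ ω, (if S ω = 1 ∧ T ω = 1 then 1 else 0) * w ω * φ (V ω) ∂μ
      = ∫ ω, E ω * w ω * S ω * φ (V ω) ∂μ :=
        integral_treated_eq_integral_propensity_mul hS hT hV hSbin hTbin hindT hET hwm hwM hφ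
    _ = ∫ ω, E ω * w ω * H ω * φ (V ω) ∂μ :=
        hindS.integral_mul_comp_eq_condExp hV hS hSbin hHS (hE.mul hwm) hEwM hφ
    _ = ∫ ω, 1 * (1 - H ω) * φ (V ω) ∂μ := by
        refine integral_congr_ae ?_
        filter_upwards [hgood] with ω h
        rw [← mul_mul_ipwWeight hc h]
        ring
    _ = ∫ ω, 1 * (1 - S ω) * φ (V ω) ∂μ :=
        (hindS'.integral_mul_comp_eq_condExp hV (measurable_const.sub hS) hSbin'
          (condExp_one_sub_ae_eq hm (integrable_of_eq_zero_or_eq_one hS hSbin) hHS)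
          stronglyMeasurable_const (ae_of_all _ fun _ => ⟨zero_le_one, le_rfl⟩) hφ).symm
    _ = ∫ ω in {ω | S ω = 0}, φ (V ω) ∂μ := by
        rw [← integral_indicator hB0]
        congr 1; ext ω
        rcases hSbin ω with hs | hs <;> simp [hs]

theorem integral_cond_target_eq_ipw_ratio (hS : Measurable S) (hT : Measurable T)
    (hV : Measurable V) (hSbin : ∀ ω, S ω = 0 ∨ S ω = 1) (hTbin : ∀ ω, T ω = 0 ∨ T ω = 1)
    (hindS : CondIndepFun m hm V S μ) (hindT : CondIndepFun m hm V T μ[|{ω | S ω = 1}])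
    (hH : StronglyMeasurable[m] H) (hE : StronglyMeasurable[m] E) (hHS : H =ᵐ[μ] μ[S|m])
    (hET : E =ᵐ[μ[|{ω | S ω = 1}]] μ[|{ω | S ω = 1}][T|m]) (hc : 0 < c)
    (hpos : ∀ᵐ ω ∂μ[|{ω | S ω = 0}], c ≤ H ω ∧ c ≤ E ω) {φ : β → ℝ} (hφ : Measurable φ)
    (hS0 : μ {ω | S ω = 0} ≠ 0) {Y : Ω → ℝ} (hY : ∀ ω, S ω = 1 → T ω = 1 → Y ω = φ (V ω)) :
    ∫ ω, φ (V ω) ∂μ[|{ω | S ω = 0}] =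
      (∫ ω, (if S ω = 1 ∧ T ω = 1 then 1 else 0) * ipwWeight (H ω) (E ω) * Y ω ∂μ) /
        ∫ ω, (if S ω = 1 ∧ T ω = 1 then 1 else 0) * ipwWeight (H ω) (E ω) ∂μ := by
  have hnum : ∫ ω, (if S ω = 1 ∧ T ω = 1 then 1 else 0) * ipwWeight (H ω) (E ω) * Y ω ∂μ =
      ∫ ω in {ω | S ω = 0}, φ (V ω) ∂μ := by
    rw [← integral_ipw_eq_setIntegral_target hS hT hV hSbin hTbin hindS hindT hH hE hHS hET hc
      hpos hφ]
    congr 1; ext ω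
    by_cases h : S ω = 1 ∧ T ω = 1
    · rw [hY ω h.1 h.2]
    · simp [h]
  have hden : ∫ ω, (if S ω = 1 ∧ T ω = 1 then 1 else 0) * ipwWeight (H ω) (E ω) ∂μ =
      μ.real {ω | S ω = 0} := by
    simpa using integral_ipw_eq_setIntegral_target hS hT hV hSbin hTbin hindS hindT hH hE hHS
      hET hc hpos (φ := fun _ => (1 : ℝ)) measurable_const
  rw [hnum, hden, setIntegral_eq_measureReal_mul_integral_cond,
    mul_div_cancel_left₀ _ ((measureReal_ne_zero_iff (measure_ne_top μ _)).mpr hS0)]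

end Identification

theorem ipw_identification_of_target_mean_general
    {Ω 𝒳 : Type*} [mΩ : MeasurableSpace Ω] [StandardBorelSpace Ω] [MeasurableSpace 𝒳]
    (μ : Measure Ω) [IsProbabilityMeasure μ]
    (X : Ω → 𝒳)
    (S A Y Y1 Y0 : Ω → ℝ)
    (hS : Measurable S) (hA : Measurable A)
    (hY1 : Measurable Y1) (hY0 : Measurable Y0)
    (hSbin : ∀ ω, S ω = 0 ∨ S ω = 1) (hAbin : ∀ ω, A ω = 0 ∨ A ω = 1)
    -- consistency: the observed outcome is the potential outcome under the received
    -- treatment, for study participants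
    (hconsist : ∀ ω, S ω = 1 → Y ω = A ω * Y1 ω + (1 - A ω) * Y0 ω)
    (hXle : MeasurableSpace.comap X inferInstance ≤ mΩ)
    -- conditional exchangeability for study participation: (Y(1), Y(0)) ⟂ S | X
    (hexchS : CondIndepFun (MeasurableSpace.comap X inferInstance) hXle
      (fun ω => (Y1 ω, Y0 ω)) S μ)
    -- conditional treatment exchangeability: (Y(1), Y(0)) ⟂ A | X within S = 1
    (hexchA : CondIndepFun (MeasurableSpace.comap X inferInstance) hXle
      (fun ω => (Y1 ω, Y0 ω)) A (μ[|{ω | S ω = 1}]))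
    -- the sampling score h(X) = P(S=1 | X) and the propensity score
    -- e₁(X) = P(A=1 | X, S=1), with e₀ = 1 − e₁
    (h e1 : 𝒳 → ℝ) (hhm : Measurable h) (he1m : Measurable e1)
    (hhdef : (fun ω => h (X ω)) =ᵐ[μ] μ[S | MeasurableSpace.comap X inferInstance])
    (he1def : (fun ω => e1 (X ω))
      =ᵐ[μ[|{ω | S ω = 1}]] (μ[|{ω | S ω = 1}])[A | MeasurableSpace.comap X inferInstance])
    -- positivity of participation and of treatment assignment on the target population
    (c : ℝ) (hc : 0 < c)
    (hpos : ∀ᵐ ω ∂(μ[|{ω | S ω = 0}]),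
      c ≤ h (X ω) ∧ c ≤ e1 (X ω) ∧ c ≤ 1 - e1 (X ω))
    (hS0pos : 0 < μ {ω | S ω = 0}) :
    (∫ ω, Y1 ω ∂(μ[|{ω | S ω = 0}])) =
      (∫ ω, (if S ω = 1 ∧ A ω = 1 then (1 : ℝ) else 0) *
          ((1 - h (X ω)) / (h (X ω) * e1 (X ω))) * Y ω ∂μ) /
      (∫ ω, (if S ω = 1 ∧ A ω = 1 then (1 : ℝ) else 0) *
          ((1 - h (X ω)) / (h (X ω) * e1 (X ω))) ∂μ) ∧
    (∫ ω, Y0 ω ∂(μ[|{ω | S ω = 0}])) =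
      (∫ ω, (if S ω = 1 ∧ A ω = 0 then (1 : ℝ) else 0) *
          ((1 - h (X ω)) / (h (X ω) * (1 - e1 (X ω)))) * Y ω ∂μ) /
      (∫ ω, (if S ω = 1 ∧ A ω = 0 then (1 : ℝ) else 0) *
          ((1 - h (X ω)) / (h (X ω) * (1 - e1 (X ω)))) ∂μ) := by
  have hX : Measurable[MeasurableSpace.comap X inferInstance] X := comap_measurable X
  have hV : Measurable fun ω => (Y1 ω, Y0 ω) := hY1.prodMk hY0
  have hH := (hhm.comp hX).stronglyMeasurable
  constructor
  · exact integral_cond_target_eq_ipw_ratio hS hA hV hSbin hAbin hexchS hexchA hH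
      (he1m.comp hX).stronglyMeasurable hhdef he1def hc (hpos.mono fun _ h => ⟨h.1, h.2.1⟩)
      measurable_fst hS0pos.ne' fun ω hs ha => by simp [hconsist ω hs, ha]
  · have hA' : ∀ ω, 1 - A ω = 0 ∨ 1 - A ω = 1 := fun ω => by
      rcases hAbin ω with h | h <;> simp [h]
    have control := integral_cond_target_eq_ipw_ratio (T := fun ω => 1 - A ω) (φ := Prod.snd)
      (Y := Y) hS (measurable_const.sub hA) hV hSbin hA' hexchS
      (hexchA.comp measurable_id (measurable_const.sub measurable_id)) hH
      ((measurable_const.sub he1m).comp hX).stronglyMeasurable hhdef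
      (condExp_one_sub_ae_eq hXle (integrable_of_eq_zero_or_eq_one hA hAbin) he1def) hc
      (hpos.mono fun _ h => ⟨h.1, h.2.2⟩) measurable_snd hS0pos.ne'
      fun ω hs ha => by simp [hconsist ω hs, show A ω = 0 by linarith]
    simp only [sub_eq_self] at control
    exact control

/-- Under conditional exchangeability for study participation
(`(Y(1),Y(0)) ⟂ S | X`), conditional treatment exchangeability within the study
(`(Y(1),Y(0)) ⟂ A | X, S = 1`), consistency (`Y = Y(a)` when `S = 1, A = a`), and
positivity of both participation and treatment assignment, the target mean
`E[Y(a) | S = 0]` is identified by the inverse-probability-weighting formula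
`E[I(S=1, A=a) (1−h(X)) / (h(X) e_a(X)) Y] / E[I(S=1, A=a) (1−h(X)) / (h(X) e_a(X))]`,
where `h(X) = P(S=1 | X)` and `e_a(X) = P(A=a | X, S=1)` (with `e_0 = 1 − e_1`). -/
theorem ipw_identification_of_target_mean
    {Ω 𝒳 : Type*} [mΩ : MeasurableSpace Ω] [StandardBorelSpace Ω] [MeasurableSpace 𝒳]
    (μ : Measure Ω) [IsProbabilityMeasure μ]
    (X : Ω → 𝒳) (hX : Measurable X)
    (S A Y Y1 Y0 : Ω → ℝ)
    (hS : Measurable S) (hA : Measurable A) (hY : Measurable Y)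
    (hY1 : Measurable Y1) (hY0 : Measurable Y0)
    (hSbin : ∀ ω, S ω = 0 ∨ S ω = 1) (hAbin : ∀ ω, A ω = 0 ∨ A ω = 1)
    (C : ℝ) (hbound : ∀ ω, |Y1 ω| ≤ C ∧ |Y0 ω| ≤ C)
    -- consistency: the observed outcome is the potential outcome under the received
    -- treatment, for study participants
    (hconsist : ∀ ω, S ω = 1 → Y ω = A ω * Y1 ω + (1 - A ω) * Y0 ω)
    (hXle : MeasurableSpace.comap X inferInstance ≤ mΩ)
    -- conditional exchangeability for study participation: (Y(1), Y(0)) ⟂ S | X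
    (hexchS : CondIndepFun (MeasurableSpace.comap X inferInstance) hXle
      (fun ω => (Y1 ω, Y0 ω)) S μ)
    -- conditional treatment exchangeability: (Y(1), Y(0)) ⟂ A | X within S = 1
    (hexchA : CondIndepFun (MeasurableSpace.comap X inferInstance) hXle
      (fun ω => (Y1 ω, Y0 ω)) A (μ[|{ω | S ω = 1}]))
    -- the sampling score h(X) = P(S=1 | X) and the propensity score
    -- e₁(X) = P(A=1 | X, S=1), with e₀ = 1 − e₁
    (h e1 : 𝒳 → ℝ) (hhm : Measurable h) (he1m : Measurable e1)
    (hhdef : (fun ω => h (X ω)) =ᵐ[μ] μ[S | MeasurableSpace.comap X inferInstance])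
    (he1def : (fun ω => e1 (X ω))
      =ᵐ[μ[|{ω | S ω = 1}]] (μ[|{ω | S ω = 1}])[A | MeasurableSpace.comap X inferInstance])
    -- positivity of participation and of treatment assignment on the target population
    (c : ℝ) (hc : 0 < c)
    (hpos : ∀ᵐ ω ∂(μ[|{ω | S ω = 0}]),
      c ≤ h (X ω) ∧ c ≤ e1 (X ω) ∧ c ≤ 1 - e1 (X ω))
    (hS1pos : 0 < μ {ω | S ω = 1}) (hS0pos : 0 < μ {ω | S ω = 0}) :
    (∫ ω, Y1 ω ∂(μ[|{ω | S ω = 0}])) =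
      (∫ ω, (if S ω = 1 ∧ A ω = 1 then (1 : ℝ) else 0) *
          ((1 - h (X ω)) / (h (X ω) * e1 (X ω))) * Y ω ∂μ) /
      (∫ ω, (if S ω = 1 ∧ A ω = 1 then (1 : ℝ) else 0) *
          ((1 - h (X ω)) / (h (X ω) * e1 (X ω))) ∂μ) ∧
    (∫ ω, Y0 ω ∂(μ[|{ω | S ω = 0}])) =
      (∫ ω, (if S ω = 1 ∧ A ω = 0 then (1 : ℝ) else 0) *
          ((1 - h (X ω)) / (h (X ω) * (1 - e1 (X ω)))) * Y ω ∂μ) /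
      (∫ ω, (if S ω = 1 ∧ A ω = 0 then (1 : ℝ) else 0) *
          ((1 - h (X ω)) / (h (X ω) * (1 - e1 (X ω)))) ∂μ) :=
  ipw_identification_of_target_mean_general (mΩ := mΩ) μ X S A Y Y1 Y0 hS hA hY1 hY0 hSbin hAbin
    hconsist hXle hexchS hexchA h e1 hhm he1m hhdef he1def c hc hpos hS0pos
end

section
/- The augmented weighting estimand τ_aw = E[w_1 R]/E[w_1] − E[w_0 R]/E[w_0] + E[μ_1(X) − μ_0(X) | S=0], with residual R = S(Y − A μ_1(X) − (1−A) μ_0(X)) and weights w_a = I(S=1,A=a)(1 − h(X))/(h(X) ẽ_a(X)), equals the true target ATE E[Y(1) − Y(0) | S=0] if the outcome models are correct (μ_a(X) = E[Y(a)|X] a.s.), even when the working sampling score h and working propensity score ẽ_a are misspecified (but bounded away from 0 and 1). -/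
/-!
Conditional independence given `X` is used fibrewise: under the regular conditional
distribution given `σ(X)` the two variables are independent, so conditional expectations
given `X` factorise. Two consequences do all the work. First, `E[Y(a) | X]` is the same
under `μ`, under `μ[· | S = 1]` and under `μ[· | S = 0]`; in particular
`E[μ_a(X) | S = 0] = E[Y(a) | S = 0]`, so the augmentation term alone is the target ATE.
Second, within `S = 1` and given `X`, the treatment indicator is independent of `Y(a)`, so
the residual `Y(a) - μ_a(X)` is orthogonal to every bounded `g(X) 1{A = a}`; taking
`g = (1 - h) / (h ẽ_a)` shows that both weighted residual means vanish, whatever the working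
scores are.
-/

open MeasureTheory ProbabilityTheory

lemma abs_indicator_one_le {Ω : Type*} (s : Set Ω) (ω : Ω) :
    |s.indicator (1 : Ω → ℝ) ω| ≤ 1 := by
  by_cases h : ω ∈ s <;> simp [h]

lemma integral_indicator_one_mul_eq_measure_mul_integral_cond {Ω : Type*} [MeasurableSpace Ω]
    (ρ : Measure Ω) [IsFiniteMeasure ρ] {T : Set Ω} (hT : MeasurableSet T) (f : Ω → ℝ) :
    ∫ ω, T.indicator (1 : Ω → ℝ) ω * f ω ∂ρ = (ρ T).toReal * ∫ ω, f ω ∂ρ[|T] := by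
  have hind : ∫ ω, T.indicator (1 : Ω → ℝ) ω * f ω ∂ρ = ∫ ω in T, f ω ∂ρ := by
    rw [← integral_indicator hT]
    congr 1; ext ω
    by_cases h : ω ∈ T <;> simp [h]
  by_cases h0 : ρ T = 0
  · rw [hind, Measure.restrict_eq_zero.2 h0, h0]; simp
  rw [hind, ProbabilityTheory.cond, integral_smul_measure, ENNReal.toReal_inv, smul_eq_mul,
    ← mul_assoc, mul_inv_cancel₀ (ENNReal.toReal_ne_zero.2 ⟨h0, measure_ne_top ρ T⟩), one_mul]

namespace ProbabilityTheory.CondIndepFun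

variable {Ω : Type*} {m mΩ : MeasurableSpace Ω} [StandardBorelSpace Ω] {hm : m ≤ mΩ}
  {ρ : Measure Ω} [IsFiniteMeasure ρ]

lemma ae_indepFun_condExpKernel {β γ : Type*} [MeasurableSpace β] [MeasurableSpace γ]
    [MeasurableSpace.CountablyGenerated (β × γ)] {f : Ω → β} {g : Ω → γ}
    (hf : Measurable f) (hg : Measurable g) (h : CondIndepFun m hm f g ρ) :
    ∀ᵐ ω ∂ρ, IndepFun f g (condExpKernel ρ m ω) := by
  rw [CondIndepFun, Kernel.indepFun_iff_compProd_map_prod_eq_compProd_prod_map_map hf hg] at h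
  filter_upwards [ae_of_ae_trim hm (Kernel.ae_eq_of_compProd_eq h)] with ω hω
  rw [indepFun_iff_map_prod_eq_prod_map_map hf.aemeasurable hg.aemeasurable]
  simpa [Kernel.map_apply _ (hf.prodMk hg), Kernel.prod_apply, Kernel.map_apply _ hf,
    Kernel.map_apply _ hg] using hω

lemma condExp_mul {F G : Ω → ℝ} (hF : Measurable F) (hG : Measurable G)
    (h : CondIndepFun m hm F G ρ) (hFi : Integrable F ρ) (hGi : Integrable G ρ)
    (hFGi : Integrable (F * G) ρ) :
    ρ[F * G | m] =ᵐ[ρ] ρ[F | m] * ρ[G | m] := by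
  filter_upwards [h.ae_indepFun_condExpKernel hF hG,
    condExp_ae_eq_integral_condExpKernel hm hFGi, condExp_ae_eq_integral_condExpKernel hm hFi,
    condExp_ae_eq_integral_condExpKernel hm hGi] with ω hind hFG hF' hG'
  rw [Pi.mul_apply, hFG, hF', hG']
  exact hind.integral_mul_eq_mul_integral hF.aestronglyMeasurable hG.aestronglyMeasurable

lemma integral_mul_mul_eq_integral_mul_mul_condExp {F G u : Ω → ℝ} (hF : Measurable F)
    (hG : Measurable G) (h : CondIndepFun m hm F G ρ) (hFi : Integrable F ρ) {K L : ℝ}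
    (hGb : ∀ ω, |G ω| ≤ K) (hu : StronglyMeasurable[m] u) (hub : ∀ ω, |u ω| ≤ L) :
    ∫ ω, u ω * G ω * F ω ∂ρ = ∫ ω, u ω * G ω * (ρ[F | m]) ω ∂ρ := by
  have hGi : Integrable G ρ := .of_bound hG.aestronglyMeasurable K (ae_of_all _ hGb)
  have hFGi : Integrable (F * G) ρ := hFi.mul_bdd hG.aestronglyMeasurable (ae_of_all _ hGb)
  have huM : AEStronglyMeasurable u ρ := (hu.mono hm).aestronglyMeasurable
  have hv : StronglyMeasurable[m] (u * ρ[F | m]) := hu.mul stronglyMeasurable_condExp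
  have hvG : Integrable (u * ρ[F | m] * G) ρ := by
    refine (((integrable_condExp (m := m) (f := F)).mul_bdd hG.aestronglyMeasurable
      (ae_of_all _ hGb)).bdd_mul huM (ae_of_all _ hub)).congr (ae_of_all _ fun ω => ?_)
    simp only [Pi.mul_apply, mul_assoc]
  calc ∫ ω, u ω * G ω * F ω ∂ρ = ∫ ω, (u * (F * G)) ω ∂ρ := by
        congr 1; ext ω; simp only [Pi.mul_apply]; ring
    _ = ∫ ω, (u * (ρ[F | m] * ρ[G | m])) ω ∂ρ := by
        rw [← integral_condExp hm]
        refine integral_congr_ae ?_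
        filter_upwards [condExp_mul_of_stronglyMeasurable_left hu
          (hFGi.bdd_mul huM (ae_of_all _ hub)) hFGi, h.condExp_mul hF hG hFi hGi hFGi]
          with ω h1 h2
        simp only [h1, Pi.mul_apply, h2]
    _ = ∫ ω, (u * ρ[F | m] * G) ω ∂ρ := by
        rw [← integral_condExp hm (f := u * ρ[F | m] * G)]
        refine integral_congr_ae ?_
        filter_upwards [condExp_mul_of_stronglyMeasurable_left hv hvG hGi] with ω h1
        simp only [h1, Pi.mul_apply]; ring
    _ = ∫ ω, u ω * G ω * (ρ[F | m]) ω ∂ρ := by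
        congr 1; ext ω; simp only [Pi.mul_apply]; ring

lemma integral_mul_mul_sub_eq_zero {F G u M : Ω → ℝ} (hF : Measurable F) (hG : Measurable G)
    (h : CondIndepFun m hm F G ρ) (hFi : Integrable F ρ) {K L : ℝ} (hGb : ∀ ω, |G ω| ≤ K)
    (hu : StronglyMeasurable[m] u) (hub : ∀ ω, |u ω| ≤ L) (hM : M =ᵐ[ρ] ρ[F | m]) :
    ∫ ω, u ω * G ω * (F ω - M ω) ∂ρ = 0 := by
  have huGm : AEStronglyMeasurable (fun ω => u ω * G ω) ρ :=
    ((hu.mono hm).mul hG.stronglyMeasurable).aestronglyMeasurable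
  have huGb : ∀ᵐ ω ∂ρ, ‖u ω * G ω‖ ≤ L * K := ae_of_all _ fun ω => by
    rw [Real.norm_eq_abs, abs_mul]
    exact mul_le_mul (hub ω) (hGb ω) (abs_nonneg _) ((abs_nonneg _).trans (hub ω))
  calc ∫ ω, u ω * G ω * (F ω - M ω) ∂ρ
      = ∫ ω, u ω * G ω * F ω - u ω * G ω * (ρ[F | m]) ω ∂ρ := by
        refine integral_congr_ae ?_
        filter_upwards [hM] with ω hω
        rw [hω, mul_sub]
    _ = 0 := by
        rw [integral_sub (hFi.bdd_mul huGm huGb) (integrable_condExp.bdd_mul huGm huGb),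
          h.integral_mul_mul_eq_integral_mul_mul_condExp hF hG hFi hGb hu hub, sub_self]

lemma indicator_preimage {β : Type*} [MeasurableSpace β] {F : Ω → ℝ} {W : Ω → β}
    (h : CondIndepFun m hm F W ρ) {t : Set β} (ht : MeasurableSet t) :
    CondIndepFun m hm F ((W ⁻¹' t).indicator (1 : Ω → ℝ)) ρ :=
  h.comp measurable_id (measurable_one.indicator ht)

lemma ae_eq_condExp_cond {β : Type*} [MeasurableSpace β] {F M : Ω → ℝ} {W : Ω → β}
    (hF : Measurable F) (hW : Measurable W) (h : CondIndepFun m hm F W ρ)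
    (hFi : Integrable F ρ) {t : Set β} (ht : MeasurableSet t) (hM : M =ᵐ[ρ] ρ[F | m]) :
    M =ᵐ[ρ[|W ⁻¹' t]] (ρ[|W ⁻¹' t])[F | m] := by
  refine (cond_absolutelyContinuous.ae_eq hM).trans ?_
  set T := W ⁻¹' t
  have hT : MeasurableSet T := hW ht
  by_cases h0 : ρ T = 0
  · rw [cond_eq_zero_of_meas_eq_zero h0]; rfl
  have hν : ρ[|T] = (ρ T)⁻¹ • ρ.restrict T := rfl
  have hc : (ρ T)⁻¹ ≠ ⊤ := ENNReal.inv_ne_top.2 h0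
  refine ae_eq_condExp_of_forall_setIntegral_eq hm (hν ▸ hFi.restrict.smul_measure hc)
    (fun s _ _ => (hν ▸ integrable_condExp.restrict.smul_measure hc).integrableOn)
    (fun s hs _ => ?_) stronglyMeasurable_condExp.aestronglyMeasurable
  have hind : ∀ f : Ω → ℝ, ∫ ω in s ∩ T, f ω ∂ρ
      = ∫ ω, s.indicator (1 : Ω → ℝ) ω * T.indicator 1 ω * f ω ∂ρ := fun f => by
    rw [← integral_indicator ((hm s hs).inter hT)]
    congr 1; ext ω
    by_cases h1 : ω ∈ s <;> by_cases h2 : ω ∈ T <;> simp [h1, h2]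
  rw [hν, Measure.restrict_smul, integral_smul_measure, integral_smul_measure,
    Measure.restrict_restrict (hm s hs), hind, hind,
    (h.indicator_preimage ht).integral_mul_mul_eq_integral_mul_mul_condExp hF
      (measurable_one.indicator hT) hFi (abs_indicator_one_le T)
      (stronglyMeasurable_one.indicator hs) (abs_indicator_one_le s)]

lemma integral_cond_eq_of_ae_eq_condExp {β : Type*} [MeasurableSpace β] {F M : Ω → ℝ}
    {W : Ω → β} (hF : Measurable F) (hW : Measurable W) (h : CondIndepFun m hm F W ρ)
    (hFi : Integrable F ρ) {t : Set β} (ht : MeasurableSet t) (hM : M =ᵐ[ρ] ρ[F | m]) :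
    ∫ ω, M ω ∂ρ[|W ⁻¹' t] = ∫ ω, F ω ∂ρ[|W ⁻¹' t] := by
  rw [← integral_condExp hm (f := F)]
  exact integral_congr_ae (h.ae_eq_condExp_cond hF hW hFi ht hM)

end ProbabilityTheory.CondIndepFun

lemma abs_one_sub_div_mul_le {c h e : ℝ} (hc : 0 < c) (hch : c < h) (hh : h < 1 - c)
    (hce : c < e) : |(1 - h) / (h * e)| ≤ 1 / (c * c) := by
  have hhe : c * c < h * e := mul_lt_mul'' hch hce hc.le hc.le
  rw [abs_of_nonneg (div_nonneg (by linarith) (by nlinarith))]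
  exact div_le_div₀ zero_le_one (by linarith) (by positivity) hhe.le

lemma integral_ite_mul_residual_eq_zero {Ω 𝒳 : Type*} [mΩ : MeasurableSpace Ω]
    [StandardBorelSpace Ω] [MeasurableSpace 𝒳] {μ : Measure Ω} [IsFiniteMeasure μ]
    {X : Ω → 𝒳} (hXle : MeasurableSpace.comap X inferInstance ≤ mΩ) {S A Y : Ω → ℝ}
    (hS : Measurable S) (hA : Measurable A) (hY : Measurable Y) {C : ℝ} (hYC : ∀ ω, |Y ω| ≤ C)
    (hexchS : CondIndepFun (MeasurableSpace.comap X inferInstance) hXle Y S μ)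
    (hexchA : CondIndepFun (MeasurableSpace.comap X inferInstance) hXle Y A
      (μ[|{ω | S ω = 1}]))
    {μY : 𝒳 → ℝ} (hμY : (fun ω => μY (X ω)) =ᵐ[μ] μ[Y | MeasurableSpace.comap X inferInstance])
    {g : 𝒳 → ℝ} (hg : Measurable g) {K : ℝ} (hgK : ∀ x, |g x| ≤ K) {a : ℝ} {R : Ω → ℝ}
    (hR : ∀ ω, S ω = 1 → A ω = a → R ω = Y ω - μY (X ω)) :
    ∫ ω, (if S ω = 1 ∧ A ω = a then 1 else 0) * g (X ω) * R ω ∂μ = 0 := by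
  rw [show {ω | S ω = 1} = S ⁻¹' {1} from rfl] at hexchA
  have hYi : ∀ ρ : Measure Ω, [IsFiniteMeasure ρ] → Integrable Y ρ := fun ρ _ =>
    .of_bound hY.aestronglyMeasurable C (ae_of_all _ hYC)
  calc ∫ ω, (if S ω = 1 ∧ A ω = a then 1 else 0) * g (X ω) * R ω ∂μ
      = ∫ ω, (S ⁻¹' {1}).indicator (1 : Ω → ℝ) ω
          * (g (X ω) * (A ⁻¹' {a}).indicator 1 ω * (Y ω - μY (X ω))) ∂μ := by
        congr 1; ext ω
        by_cases h1 : S ω = 1 <;> by_cases h2 : A ω = a <;> simp [h1, h2, hR]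
    _ = (μ (S ⁻¹' {1})).toReal * ∫ ω, g (X ω) * (A ⁻¹' {a}).indicator 1 ω
          * (Y ω - μY (X ω)) ∂μ[|S ⁻¹' {1}] :=
        integral_indicator_one_mul_eq_measure_mul_integral_cond μ
          (hS (measurableSet_singleton 1)) _
    _ = 0 := mul_eq_zero_of_right _ <| CondIndepFun.integral_mul_mul_sub_eq_zero hY
        (measurable_one.indicator (hA (measurableSet_singleton a)))
        (hexchA.indicator_preimage (measurableSet_singleton a)) (hYi _) (abs_indicator_one_le _)
        (hg.comp (Measurable.of_comap_le le_rfl)).stronglyMeasurable (fun ω => hgK (X ω))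
        (hexchS.ae_eq_condExp_cond hY hS (hYi μ) (measurableSet_singleton 1) hμY)

theorem augmented_weighting_outcome_model_correct_general
    {Ω 𝒳 : Type*} [mΩ : MeasurableSpace Ω] [StandardBorelSpace Ω] [MeasurableSpace 𝒳]
    (μ : Measure Ω) [IsProbabilityMeasure μ]
    (X : Ω → 𝒳)
    (S A Y Y1 Y0 : Ω → ℝ)
    (hS : Measurable S) (hA : Measurable A)
    (hY1 : Measurable Y1) (hY0 : Measurable Y0)
    (C : ℝ) (hbound : ∀ ω, |Y1 ω| ≤ C ∧ |Y0 ω| ≤ C)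
    (hconsist : ∀ ω, S ω = 1 → Y ω = A ω * Y1 ω + (1 - A ω) * Y0 ω)
    (hXle : MeasurableSpace.comap X inferInstance ≤ mΩ)
    (hexchS : CondIndepFun (MeasurableSpace.comap X inferInstance) hXle
      (fun ω => (Y1 ω, Y0 ω)) S μ)
    (hexchA : CondIndepFun (MeasurableSpace.comap X inferInstance) hXle
      (fun ω => (Y1 ω, Y0 ω)) A (μ[|{ω | S ω = 1}]))
    -- working (possibly misspecified) sampling and propensity scores,
    -- bounded away from 0 and 1, with ẽ₁ + ẽ₀ = 1
    (c : ℝ) (hc : 0 < c)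
    (ht te1 te0 : 𝒳 → ℝ) (htm : Measurable ht) (hte1m : Measurable te1)
    (hte0m : Measurable te0)
    (htb : ∀ x, c < ht x ∧ ht x < 1 - c)
    (hteb : ∀ x, c < te1 x ∧ te1 x < 1 ∧ c < te0 x ∧ te0 x < 1)
    -- correctly specified outcome regressions: μ_a(X) = E[Y(a) | X] a.s.
    (m1 m0 : 𝒳 → ℝ)
    (hm1 : (fun ω => m1 (X ω)) =ᵐ[μ] μ[Y1 | MeasurableSpace.comap X inferInstance])
    (hm0 : (fun ω => m0 (X ω)) =ᵐ[μ] μ[Y0 | MeasurableSpace.comap X inferInstance])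
    (R : Ω → ℝ)
    (hR : ∀ ω, R ω = S ω * (Y ω - A ω * m1 (X ω) - (1 - A ω) * m0 (X ω)))
    (w1 w0 : Ω → ℝ)
    (hw1 : ∀ ω, w1 ω = (if S ω = 1 ∧ A ω = 1 then (1 : ℝ) else 0) *
      ((1 - ht (X ω)) / (ht (X ω) * te1 (X ω))))
    (hw0 : ∀ ω, w0 ω = (if S ω = 1 ∧ A ω = 0 then (1 : ℝ) else 0) *
      ((1 - ht (X ω)) / (ht (X ω) * te0 (X ω))))
    (τaw : ℝ)
    (hτaw : τaw = (∫ ω, w1 ω * R ω ∂μ) / (∫ ω, w1 ω ∂μ)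
      - (∫ ω, w0 ω * R ω ∂μ) / (∫ ω, w0 ω ∂μ)
      + ∫ ω, (m1 (X ω) - m0 (X ω)) ∂(μ[|{ω | S ω = 0}])) :
    τaw = ∫ ω, (Y1 ω - Y0 ω) ∂(μ[|{ω | S ω = 0}]) := by
  have hY1i : Integrable Y1 μ := .of_bound hY1.aestronglyMeasurable C
    (ae_of_all _ fun ω => (hbound ω).1)
  have hY0i : Integrable Y0 μ := .of_bound hY0.aestronglyMeasurable C
    (ae_of_all _ fun ω => (hbound ω).2)
  have hw1R : ∫ ω, w1 ω * R ω ∂μ = 0 := by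
    simp only [hw1]
    exact integral_ite_mul_residual_eq_zero hXle hS hA hY1 (fun ω => (hbound ω).1)
      (hexchS.comp measurable_fst measurable_id) (hexchA.comp measurable_fst measurable_id) hm1
      ((measurable_const.sub htm).div (htm.mul hte1m))
      (fun x => abs_one_sub_div_mul_le hc (htb x).1 (htb x).2 (hteb x).1)
      (fun ω hS1 hA1 => by simp [hR, hS1, hA1, hconsist ω hS1])
  have hw0R : ∫ ω, w0 ω * R ω ∂μ = 0 := by
    simp only [hw0]
    exact integral_ite_mul_residual_eq_zero hXle hS hA hY0 (fun ω => (hbound ω).2)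
      (hexchS.comp measurable_snd measurable_id) (hexchA.comp measurable_snd measurable_id) hm0
      ((measurable_const.sub htm).div (htm.mul hte0m))
      (fun x => abs_one_sub_div_mul_le hc (htb x).1 (htb x).2 (hteb x).2.2.1)
      (fun ω hS1 hA0 => by simp [hR, hS1, hA0, hconsist ω hS1])
  rw [hτaw, hw1R, hw0R, zero_div, zero_div, sub_zero, zero_add,
    show {ω | S ω = 0} = S ⁻¹' {0} from rfl]
  exact CondIndepFun.integral_cond_eq_of_ae_eq_condExp (hY1.sub hY0) hS
    (hexchS.comp (measurable_fst.sub measurable_snd) measurable_id) (hY1i.sub hY0i)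
    (measurableSet_singleton 0) ((hm1.sub hm0).trans (condExp_sub hY1i hY0i _).symm)

/-- The augmented weighting estimand
`τ_aw = E[w₁R]/E[w₁] − E[w₀R]/E[w₀] + E[μ₁(X) − μ₀(X) | S=0]`, with residual
`R = S(Y − Aμ₁(X) − (1−A)μ₀(X))` and weights `w_a = I(S=1,A=a)(1−h(X))/(h(X)ẽ_a(X))`,
equals the true target ATE `E[Y(1) − Y(0) | S=0]` if the outcome models are correct
(`μ_a(X) = E[Y(a)|X]` a.s.), even when the working sampling score `h` and working
propensity scores `ẽ_a` are misspecified (but bounded away from 0 and 1). -/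
theorem augmented_weighting_outcome_model_correct
    {Ω 𝒳 : Type*} [mΩ : MeasurableSpace Ω] [StandardBorelSpace Ω] [MeasurableSpace 𝒳]
    (μ : Measure Ω) [IsProbabilityMeasure μ]
    (X : Ω → 𝒳) (hX : Measurable X)
    (S A Y Y1 Y0 : Ω → ℝ)
    (hS : Measurable S) (hA : Measurable A) (hY : Measurable Y)
    (hY1 : Measurable Y1) (hY0 : Measurable Y0)
    (hSbin : ∀ ω, S ω = 0 ∨ S ω = 1) (hAbin : ∀ ω, A ω = 0 ∨ A ω = 1)
    (C : ℝ) (hbound : ∀ ω, |Y1 ω| ≤ C ∧ |Y0 ω| ≤ C)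
    (hconsist : ∀ ω, S ω = 1 → Y ω = A ω * Y1 ω + (1 - A ω) * Y0 ω)
    (hXle : MeasurableSpace.comap X inferInstance ≤ mΩ)
    (hexchS : CondIndepFun (MeasurableSpace.comap X inferInstance) hXle
      (fun ω => (Y1 ω, Y0 ω)) S μ)
    (hexchA : CondIndepFun (MeasurableSpace.comap X inferInstance) hXle
      (fun ω => (Y1 ω, Y0 ω)) A (μ[|{ω | S ω = 1}]))
    (hS1pos : 0 < μ {ω | S ω = 1}) (hS0pos : 0 < μ {ω | S ω = 0})
    -- working (possibly misspecified) sampling and propensity scores,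
    -- bounded away from 0 and 1, with ẽ₁ + ẽ₀ = 1
    (c : ℝ) (hc : 0 < c)
    (ht te1 te0 : 𝒳 → ℝ) (htm : Measurable ht) (hte1m : Measurable te1)
    (hte0m : Measurable te0)
    (hsum : ∀ x, te1 x + te0 x = 1)
    (htb : ∀ x, c < ht x ∧ ht x < 1 - c)
    (hteb : ∀ x, c < te1 x ∧ te1 x < 1 ∧ c < te0 x ∧ te0 x < 1)
    -- correctly specified outcome regressions: μ_a(X) = E[Y(a) | X] a.s.
    (m1 m0 : 𝒳 → ℝ) (hm1m : Measurable m1) (hm0m : Measurable m0)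
    (hm1 : (fun ω => m1 (X ω)) =ᵐ[μ] μ[Y1 | MeasurableSpace.comap X inferInstance])
    (hm0 : (fun ω => m0 (X ω)) =ᵐ[μ] μ[Y0 | MeasurableSpace.comap X inferInstance])
    (R : Ω → ℝ)
    (hR : ∀ ω, R ω = S ω * (Y ω - A ω * m1 (X ω) - (1 - A ω) * m0 (X ω)))
    (w1 w0 : Ω → ℝ)
    (hw1 : ∀ ω, w1 ω = (if S ω = 1 ∧ A ω = 1 then (1 : ℝ) else 0) *
      ((1 - ht (X ω)) / (ht (X ω) * te1 (X ω))))
    (hw0 : ∀ ω, w0 ω = (if S ω = 1 ∧ A ω = 0 then (1 : ℝ) else 0) *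
      ((1 - ht (X ω)) / (ht (X ω) * te0 (X ω))))
    (τaw : ℝ)
    (hτaw : τaw = (∫ ω, w1 ω * R ω ∂μ) / (∫ ω, w1 ω ∂μ)
      - (∫ ω, w0 ω * R ω ∂μ) / (∫ ω, w0 ω ∂μ)
      + ∫ ω, (m1 (X ω) - m0 (X ω)) ∂(μ[|{ω | S ω = 0}])) :
    τaw = ∫ ω, (Y1 ω - Y0 ω) ∂(μ[|{ω | S ω = 0}]) :=
  augmented_weighting_outcome_model_correct_general (mΩ := mΩ) μ X S A Y Y1 Y0 hS hA hY1 hY0 C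
    hbound hconsist hXle hexchS hexchA c hc ht te1 te0 htm hte1m hte0m htb hteb m1 m0 hm1 hm0 R hR
    w1 w0 hw1 hw0 τaw hτaw
end
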